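/- Strong completeness theorem: if X₀ ⊬ φ, then there is a security game (D, {A_d}_{d∈D}, π), an action d ∈ D of the defender, and a response action a ∈ A_d of the attacker such that (d,a) ⊨ χ for each formula χ ∈ X₀ and (d,a) ⊭ φ. -/

import Mathlib

/-- Formulae of the language Φ: propositional variables, negation, implication,
the necessity modality `N` (`nec`), and the attacker's blameworthiness modality `A` (`blame`). -/
inductive Formula : Type
  | var : ℕ → Formula
  | neg : Formula → Formula
  | imp : Formula → Formula → Formula
  | nec : Formula → Formula
  | blame : Formula → Formula

namespace Formula

/-- Conjunction, defined through `→` and `¬` in the standard way. -/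
def conj (φ ψ : Formula) : Formula := neg (imp φ (neg ψ))

/-- Disjunction, defined through `→` and `¬` in the standard way. -/
def disj (φ ψ : Formula) : Formula := imp (neg φ) ψ

/-- Biconditional, defined through `→` and `¬` in the standard way. -/
def biimp (φ ψ : Formula) : Formula := conj (imp φ ψ) (imp ψ φ)

/-- `R φ` is an abbreviation for `¬(φ → A φ)`. -/
def R (φ : Formula) : Formula := neg (imp φ (blame φ))

end Formula

/-- A formula is a propositional tautology if it evaluates to true under every
truth assignment that respects `¬` and `→` (treating all other formulae as atoms). -/
def IsTaut (φ : Formula) : Prop :=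
  ∀ v : Formula → Bool,
    (∀ ψ, v ψ.neg = !(v ψ)) →
    (∀ ψ χ, v (ψ.imp χ) = (!(v ψ) || v χ)) →
    v φ = true

/-- Provability `⊢ φ` in the logical system for blameworthiness in security games. -/
inductive Prov : Formula → Prop
  | taut {φ} : IsTaut φ → Prov φ
  | truthN (φ : Formula) : Prov ((φ.nec).imp φ)
  | truthA (φ : Formula) : Prov ((φ.blame).imp φ)
  | negIntro (φ : Formula) : Prov (((φ.nec).neg).imp (((φ.nec).neg).nec))
  | distrib (φ ψ : Formula) : Prov (((φ.imp ψ).nec).imp ((φ.nec).imp (ψ.nec)))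
  | unavoid (φ : Formula) : Prov ((φ.nec).imp ((φ.blame).neg))
  | strictCond (φ ψ : Formula) : Prov (((φ.imp ψ).nec).imp ((ψ.blame).imp (φ.imp (φ.blame))))
  | conjAx (φ ψ : Formula) : Prov (((φ.conj ψ).blame).imp ((φ.blame).disj (ψ.blame)))
  | noBlame (φ : Formula) : Prov (((φ.imp (φ.blame)).blame).neg)
  | mp {φ ψ} : Prov (φ.imp ψ) → Prov φ → Prov ψ
  | necRule {φ} : Prov φ → Prov (φ.nec)

/-- `X ⊢ φ`: provability from the theorems of the logical system together with
additional hypotheses `X`, using only the Modus Ponens rule. -/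
inductive ProvFrom (X : Set Formula) : Formula → Prop
  | hyp {φ} : φ ∈ X → ProvFrom X φ
  | thm {φ} : Prov φ → ProvFrom X φ
  | mp {φ ψ} : ProvFrom X (φ.imp ψ) → ProvFrom X φ → ProvFrom X ψ

/-- A set of formulae is consistent if no contradiction is derivable from it. -/
def Consistent (X : Set Formula) : Prop := ¬ ∃ φ, ProvFrom X φ ∧ ProvFrom X φ.neg

/-- A maximal consistent set of formulae. -/
def MaxConsistent (X : Set Formula) : Prop :=
  Consistent X ∧ ∀ Y, X ⊆ Y → Consistent Y → Y = X

/-- A security game: a set `D` of actions of the defender; for each `d ∈ D` a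
nonempty set `A d` of actions of the attacker in response to `d`; and a valuation
assigning to each propositional variable a set of action profiles `(d, a)`. -/
structure SecurityGame where
  D : Type
  A : D → Type
  nonempty : ∀ d, Nonempty (A d)
  val : ℕ → ∀ d : D, A d → Prop

/-- The satisfaction relation `(d, a) ⊨ φ` of a security game. -/
def Sat (G : SecurityGame) : Formula → ∀ d : G.D, G.A d → Prop
  | .var p, d, a => G.val p d a
  | .neg φ, d, a => ¬ Sat G φ d a
  | .imp φ ψ, d, a => Sat G φ d a → Sat G ψ d a
  | .nec φ, _, _ => ∀ (d' : G.D) (a' : G.A d'), Sat G φ d' a'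
  | .blame φ, d, a => Sat G φ d a ∧ ∃ a' : G.A d, ¬ Sat G φ d a'

/-- The set Ω of the canonical game `G(X)`: all maximal consistent sets of formulae
containing `{φ | N φ ∈ X}`. -/
def canonicalOmega (X : Set Formula) : Set (Set Formula) :=
  {ω | MaxConsistent ω ∧ ∀ φ, φ.nec ∈ X → φ ∈ ω}

/-- The indistinguishability relation `ω ∼ ω'` of the canonical game. -/
def simRel (ω ω' : Set Formula) : Prop := ∀ φ : Formula, φ.R ∈ ω ↔ φ.R ∈ ω'

/-- The `∼`-equivalence class `[δ]` of `δ` inside Ω. -/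
def eqClass (X : Set Formula) (δ : Set Formula) : Set (Set Formula) :=
  {ω ∈ canonicalOmega X | simRel δ ω}

/-- The canonical security game `G(X)`. -/
def canonicalGame (X : Set Formula) : SecurityGame where
  D := canonicalOmega X
  A := fun δ => {ω : canonicalOmega X // simRel δ.val ω.val}
  nonempty := fun δ => ⟨⟨δ, fun _ => Iff.rfl⟩⟩
  val := fun p _ a => Formula.var p ∈ a.val.val

/-!
Canonical model. The defender's actions are the maximal consistent sets `ω` that contain `ψ`
whenever `X` contains `N ψ`, for one maximal consistent `X` extending `X₀ ∪ {¬φ}`; the attacker's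
responses to `δ` are the `ω` that agree with `δ` on every formula `R τ = ¬(τ → A τ)`. The truth
lemma for `A` rests on one observation: in a maximal consistent `ω`, the formulae of `ω` that are
not blamed in `ω` form a deductively closed set (Strict Conditional and Conjunction make it closed
under modus ponens). So if `A ψ ∈ ω`, that set does not prove `ψ` and extends to a maximal
consistent `ω'` avoiding `ψ`; since `⊢ ¬A(R τ)` and `⊢ ¬A(¬R τ)`, the literals `± R τ` of `ω` are
unblamed, hence `ω'` is indistinguishable from `ω`.
-/

open Formula

theorem isTaut_imp_self (a : Formula) : IsTaut (a.imp a) := fun v _ hi => by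
  simp only [hi]; cases v a <;> rfl

theorem isTaut_imp_intro (a b : Formula) : IsTaut (a.imp (b.imp a)) := fun v _ hi => by
  simp only [hi]; cases v a <;> cases v b <;> rfl

theorem isTaut_imp_distrib (x a b : Formula) :
    IsTaut ((x.imp (a.imp b)).imp ((x.imp a).imp (x.imp b))) := fun v _ hi => by
  simp only [hi]; cases v x <;> cases v a <;> cases v b <;> rfl

theorem isTaut_absurd (a b : Formula) : IsTaut (a.imp (a.neg.imp b)) := fun v hn hi => by
  simp only [hi, hn]; cases v a <;> cases v b <;> rfl

theorem isTaut_not_imp_self (a : Formula) : IsTaut ((a.neg.imp a).imp a) := fun v hn hi => by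
  simp only [hi, hn]; cases v a <;> rfl

namespace ProvFrom

variable {X : Set Formula} {φ ψ : Formula}

theorem mono {Y : Set Formula} (h : ProvFrom X φ) (hXY : X ⊆ Y) : ProvFrom Y φ := by
  induction h with
  | hyp h => exact .hyp (hXY h)
  | thm h => exact .thm h
  | mp _ _ ih₁ ih₂ => exact .mp ih₁ ih₂

theorem deduction (h : ProvFrom (insert φ X) ψ) : ProvFrom X (φ.imp ψ) := by
  induction h with
  | hyp h =>
    rcases h with rfl | h
    · exact .thm (.taut (isTaut_imp_self _))
    · exact .mp (.thm (.taut (isTaut_imp_intro _ φ))) (.hyp h)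
  | thm h => exact .mp (.thm (.taut (isTaut_imp_intro _ φ))) (.thm h)
  | mp _ _ ih₁ ih₂ => exact .mp (.mp (.thm (.taut (isTaut_imp_distrib φ _ _))) ih₁) ih₂

theorem prov_of_empty (h : ProvFrom ∅ φ) : Prov φ := by
  induction h with
  | hyp h => exact absurd h (Set.notMem_empty _)
  | thm h => exact h
  | mp _ _ ih₁ ih₂ => exact .mp ih₁ ih₂

theorem of_not_consistent (hX : ¬ Consistent X) (φ : Formula) : ProvFrom X φ := by
  obtain ⟨θ, hθ, hnθ⟩ := not_not.mp hX
  exact .mp (.mp (.thm (.taut (isTaut_absurd θ φ))) hθ) hnθ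

theorem mem_of_closed (hthm : ∀ {φ}, Prov φ → φ ∈ X)
    (hmp : ∀ {φ ψ}, φ.imp ψ ∈ X → φ ∈ X → ψ ∈ X) (h : ProvFrom X φ) : φ ∈ X := by
  induction h with
  | hyp h => exact h
  | thm h => exact hthm h
  | mp _ _ ih₁ ih₂ => exact hmp ih₁ ih₂

theorem exists_mem_of_sUnion {c : Set (Set Formula)} (hc : DirectedOn (· ⊆ ·) c)
    (hne : c.Nonempty) (h : ProvFrom (⋃₀ c) φ) : ∃ u ∈ c, ProvFrom u φ := by
  induction h with
  | hyp h =>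
    obtain ⟨u, hu, hφu⟩ := h
    exact ⟨u, hu, .hyp hφu⟩
  | thm h => exact ⟨hne.some, hne.some_mem, .thm h⟩
  | mp _ _ ih₁ ih₂ =>
    obtain ⟨u₁, hu₁, h₁⟩ := ih₁
    obtain ⟨u₂, hu₂, h₂⟩ := ih₂
    obtain ⟨w, hw, hu₁w, hu₂w⟩ := hc u₁ hu₁ u₂ hu₂
    exact ⟨w, hw, .mp (h₁.mono hu₁w) (h₂.mono hu₂w)⟩

end ProvFrom

theorem consistent_insert_neg {X : Set Formula} {φ : Formula} (h : ¬ ProvFrom X φ) :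
    Consistent (insert φ.neg X) := fun hc =>
  h (.mp (.thm (.taut (isTaut_not_imp_self φ)))
    (ProvFrom.deduction (ProvFrom.of_not_consistent (not_not_intro hc) φ)))

theorem consistent_sUnion {c : Set (Set Formula)} (hc : ∀ u ∈ c, Consistent u)
    (hchain : IsChain (· ⊆ ·) c) (hne : c.Nonempty) : Consistent (⋃₀ c) := by
  rintro ⟨θ, hθ, hnθ⟩
  obtain ⟨u₁, hu₁, h₁⟩ := ProvFrom.exists_mem_of_sUnion hchain.directedOn hne hθ
  obtain ⟨u₂, hu₂, h₂⟩ := ProvFrom.exists_mem_of_sUnion hchain.directedOn hne hnθ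
  obtain ⟨w, hw, hu₁w, hu₂w⟩ := hchain.directedOn u₁ hu₁ u₂ hu₂
  exact hc w hw ⟨θ, h₁.mono hu₁w, h₂.mono hu₂w⟩

theorem exists_maxConsistent_superset {X : Set Formula} (hX : Consistent X) :
    ∃ M, X ⊆ M ∧ MaxConsistent M := by
  obtain ⟨M, hXM, hmax⟩ := zorn_subset_nonempty {Y | Consistent Y}
    (fun c hc hchain hne => ⟨⋃₀ c, consistent_sUnion hc hchain hne,
      fun _ => Set.subset_sUnion_of_mem⟩) X hX
  exact ⟨M, hXM, hmax.1, fun Y hMY hY => hmax.eq_of_ge hY hMY⟩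

namespace MaxConsistent

variable {M : Set Formula} {φ ψ : Formula}

theorem mem_of_provFrom (hM : MaxConsistent M) (h : ProvFrom M φ) : φ ∈ M := by
  have hcons : Consistent (insert φ M) := by
    rintro ⟨θ, hθ, hnθ⟩
    exact hM.1 ⟨θ, .mp hθ.deduction h, .mp hnθ.deduction h⟩
  exact hM.2 _ (Set.subset_insert φ M) hcons ▸ Set.mem_insert φ M

theorem mem_of_prov (hM : MaxConsistent M) (h : Prov φ) : φ ∈ M :=
  hM.mem_of_provFrom (.thm h)

theorem mem_of_prov_imp (hM : MaxConsistent M) (h : Prov (φ.imp ψ)) (hφ : φ ∈ M) : ψ ∈ M :=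
  hM.mem_of_provFrom (.mp (.thm h) (.hyp hφ))

theorem mp_mem (hM : MaxConsistent M) (h : φ.imp ψ ∈ M) (hφ : φ ∈ M) : ψ ∈ M :=
  hM.mem_of_provFrom (.mp (.hyp h) (.hyp hφ))

theorem neg_mem_iff (hM : MaxConsistent M) : φ.neg ∈ M ↔ φ ∉ M := by
  refine ⟨fun hnφ hφ => hM.1 ⟨φ, .hyp hφ, .hyp hnφ⟩, fun hφ => ?_⟩
  have hcons : Consistent (insert φ.neg M) :=
    consistent_insert_neg fun h => hφ (hM.mem_of_provFrom h)
  exact hM.2 _ (Set.subset_insert _ M) hcons ▸ Set.mem_insert _ M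

theorem imp_mem_iff (hM : MaxConsistent M) : φ.imp ψ ∈ M ↔ (φ ∈ M → ψ ∈ M) := by
  refine ⟨hM.mp_mem, fun h => ?_⟩
  by_cases hφ : φ ∈ M
  · exact hM.mem_of_prov_imp (.taut (isTaut_imp_intro ψ φ)) (h hφ)
  · refine hM.mem_of_provFrom (ProvFrom.deduction ?_)
    exact .mp (.mp (.thm (.taut (isTaut_absurd φ ψ))) (.hyp (Set.mem_insert _ _)))
      (.hyp (Set.mem_insert_of_mem _ (hM.neg_mem_iff.2 hφ)))

theorem conj_mem_iff (hM : MaxConsistent M) : φ.conj ψ ∈ M ↔ φ ∈ M ∧ ψ ∈ M := by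
  simp only [conj, hM.neg_mem_iff, hM.imp_mem_iff]; tauto

theorem disj_mem_iff (hM : MaxConsistent M) : φ.disj ψ ∈ M ↔ φ ∈ M ∨ ψ ∈ M := by
  simp only [disj, hM.neg_mem_iff, hM.imp_mem_iff]; tauto

theorem R_mem_iff (hM : MaxConsistent M) : φ.R ∈ M ↔ φ ∈ M ∧ φ.blame ∉ M := by
  simp only [R, hM.neg_mem_iff, hM.imp_mem_iff]; tauto

end MaxConsistent

theorem exists_maxConsistent_of_not_provFrom {X : Set Formula} {φ : Formula}
    (h : ¬ ProvFrom X φ) : ∃ M, X ⊆ M ∧ MaxConsistent M ∧ φ ∉ M := by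
  obtain ⟨M, hXM, hM⟩ := exists_maxConsistent_superset (consistent_insert_neg h)
  exact ⟨M, (Set.subset_insert _ _).trans hXM, hM,
    hM.neg_mem_iff.1 (hXM (Set.mem_insert _ _))⟩

theorem Prov.of_forall_maxConsistent {φ : Formula}
    (h : ∀ M, MaxConsistent M → φ ∈ M) : Prov φ := by
  by_contra hφ
  obtain ⟨M, -, hM, hφM⟩ := exists_maxConsistent_of_not_provFrom (X := ∅) fun h' =>
    hφ h'.prov_of_empty
  exact hφM (h M hM)

namespace MaxConsistent

variable {M : Set Formula} {φ ψ : Formula}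

theorem nec_mem_of_prov (hM : MaxConsistent M) (h : Prov φ) : φ.nec ∈ M :=
  hM.mem_of_prov (.necRule h)

theorem nec_mp (hM : MaxConsistent M) (h : (φ.imp ψ).nec ∈ M) (hφ : φ.nec ∈ M) : ψ.nec ∈ M :=
  hM.mp_mem (hM.mem_of_prov_imp (.distrib φ ψ) h) hφ

theorem nec_nec_mem (hM : MaxConsistent M) (h : φ.nec ∈ M) : φ.nec.nec ∈ M := by
  have hdual : Prov (φ.nec.neg.nec.neg.imp φ.nec) := Prov.of_forall_maxConsistent fun N hN =>
    hN.imp_mem_iff.2 fun hn => by_contra fun hφ =>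
      hN.neg_mem_iff.1 hn (hN.mem_of_prov_imp (.negIntro φ) (hN.neg_mem_iff.2 hφ))
  have hn : φ.nec.neg.nec ∉ M := fun hn =>
    hM.neg_mem_iff.1 (hM.mem_of_prov_imp (.truthN _) hn) h
  exact hM.nec_mp (hM.nec_mem_of_prov hdual)
    (hM.mem_of_prov_imp (.negIntro _) (hM.neg_mem_iff.2 hn))

theorem blame_mem_of_prov_imp (hM : MaxConsistent M) (h : Prov (φ.imp ψ))
    (hψ : ψ.blame ∈ M) (hφ : φ ∈ M) : φ.blame ∈ M :=
  hM.mp_mem (hM.mp_mem (hM.mem_of_prov_imp (.strictCond φ ψ) (hM.nec_mem_of_prov h)) hψ) hφ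

theorem blame_or_blame_of_blame_conj (hM : MaxConsistent M) (h : (φ.conj ψ).blame ∈ M) :
    φ.blame ∈ M ∨ ψ.blame ∈ M :=
  hM.disj_mem_iff.1 (hM.mem_of_prov_imp (.conjAx φ ψ) h)

theorem blame_imp_blame_not_mem (hM : MaxConsistent M) (φ : Formula) :
    (φ.imp φ.blame).blame ∉ M :=
  hM.neg_mem_iff.1 (hM.mem_of_prov (.noBlame φ))

theorem blame_mem_of_equiv (hM : MaxConsistent M)
    (hφψ : ∀ N, MaxConsistent N → (φ ∈ N ↔ ψ ∈ N)) (h : φ.blame ∈ M) : ψ.blame ∈ M :=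
  hM.blame_mem_of_prov_imp
    (Prov.of_forall_maxConsistent fun N hN => hN.imp_mem_iff.2 (hφψ N hN).2) h
    ((hφψ M hM).1 (hM.mem_of_prov_imp (.truthA φ) h))

theorem blame_R_not_mem (hM : MaxConsistent M) (τ : Formula) : τ.R.blame ∉ M := by
  intro h
  set γ := τ.imp τ.blame
  have hnγ : γ ∉ M := hM.neg_mem_iff.1 (hM.mem_of_prov_imp (.truthA _) h)
  have hτ : τ ∈ M ∧ τ.blame ∉ M := by simpa only [γ, hM.imp_mem_iff, Classical.not_imp] using hnγ
  -- `¬γ` is `τ ∧ ¬A τ`, and Conjunction puts the blame on the second conjunct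
  have hconj : (τ.conj τ.blame.neg).blame ∈ M := hM.blame_mem_of_equiv (fun N hN => by
    simp only [R, conj, hN.neg_mem_iff, hN.imp_mem_iff]; tauto) h
  have hAnAτ : τ.blame.neg.blame ∈ M :=
    (hM.blame_or_blame_of_blame_conj hconj).resolve_left hτ.2
  -- `A τ` gives `γ`, hence `A γ` under `γ → A γ`, against No Blame
  have hweaken : Prov ((γ.imp γ.blame).imp τ.blame.neg) :=
    Prov.of_forall_maxConsistent fun N hN => hN.imp_mem_iff.2 fun himp =>
      hN.neg_mem_iff.2 fun hAτ =>
        hN.blame_imp_blame_not_mem τ (hN.mp_mem himp (hN.imp_mem_iff.2 fun _ => hAτ))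
  exact hM.blame_imp_blame_not_mem γ <|
    hM.blame_mem_of_prov_imp hweaken hAnAτ (hM.imp_mem_iff.2 fun hγ => absurd hγ hnγ)

theorem blame_neg_R_not_mem (hM : MaxConsistent M) (τ : Formula) : τ.R.neg.blame ∉ M :=
  fun h => hM.blame_imp_blame_not_mem τ <|
    hM.blame_mem_of_equiv (fun N hN => by simp only [R, hN.neg_mem_iff, not_not]) h

end MaxConsistent

def necessities (M : Set Formula) : Set Formula := {ψ | ψ.nec ∈ M}

def unblamed (M : Set Formula) : Set Formula := {ψ | ψ ∈ M ∧ ψ.blame ∉ M}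

namespace MaxConsistent

variable {M : Set Formula} {φ ψ : Formula}

theorem mem_necessities_of_provFrom (hM : MaxConsistent M) (h : ProvFrom (necessities M) φ) :
    φ ∈ necessities M :=
  h.mem_of_closed hM.nec_mem_of_prov hM.nec_mp

theorem necessities_subset_unblamed (hM : MaxConsistent M) : necessities M ⊆ unblamed M :=
  fun ψ hψ => ⟨hM.mem_of_prov_imp (.truthN ψ) hψ,
    hM.neg_mem_iff.1 (hM.mem_of_prov_imp (.unavoid ψ) hψ)⟩

theorem unblamed_mp (hM : MaxConsistent M) (h : φ.imp ψ ∈ unblamed M) (hφ : φ ∈ unblamed M) :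
    ψ ∈ unblamed M := by
  refine ⟨hM.mp_mem h.1 hφ.1, fun hψ => ?_⟩
  -- Strict Conditional moves the blame for `ψ` to the premises `φ ∧ (φ → ψ)`, Conjunction splits it
  have hmp : Prov ((φ.conj (φ.imp ψ)).imp ψ) := Prov.of_forall_maxConsistent fun N hN => by
    simp only [hN.imp_mem_iff, hN.conj_mem_iff]; tauto
  rcases hM.blame_or_blame_of_blame_conj
    (hM.blame_mem_of_prov_imp hmp hψ (hM.conj_mem_iff.2 ⟨hφ.1, h.1⟩)) with hAφ | hAimp
  · exact hφ.2 hAφ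
  · exact h.2 hAimp

theorem mem_unblamed_of_provFrom (hM : MaxConsistent M) (h : ProvFrom (unblamed M) φ) :
    φ ∈ unblamed M :=
  h.mem_of_closed (fun hφ => hM.necessities_subset_unblamed (hM.nec_mem_of_prov hφ))
    hM.unblamed_mp

end MaxConsistent

theorem simRel.symm {ω ω' : Set Formula} (h : simRel ω ω') : simRel ω' ω :=
  fun τ => (h τ).symm

theorem simRel.trans {ω ω' ω'' : Set Formula} (h : simRel ω ω') (h' : simRel ω' ω'') :
    simRel ω ω'' :=
  fun τ => (h τ).trans (h' τ)

theorem simRel_of_unblamed_subset {ω ω' : Set Formula} (hω : MaxConsistent ω)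
    (hω' : MaxConsistent ω') (h : unblamed ω ⊆ ω') : simRel ω ω' := by
  intro τ
  refine ⟨fun hR => h ⟨hR, hω.blame_R_not_mem τ⟩, fun hR => ?_⟩
  by_contra hnR
  exact hω'.neg_mem_iff.1 (h ⟨hω.neg_mem_iff.2 hnR, hω.blame_neg_R_not_mem τ⟩) hR

section Canonical

variable {X ω : Set Formula}

theorem self_mem_canonicalOmega (hX : MaxConsistent X) : X ∈ canonicalOmega X :=
  ⟨hX, fun _ hφ => hX.mem_of_prov_imp (.truthN _) hφ⟩

theorem nec_mem_iff_of_mem_canonicalOmega (hX : MaxConsistent X) (hω : ω ∈ canonicalOmega X)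
    {φ : Formula} : φ.nec ∈ ω ↔ φ.nec ∈ X := by
  refine ⟨fun h => ?_, fun h => hω.2 _ (hX.nec_nec_mem h)⟩
  by_contra hn
  have hnn : φ.nec.neg.nec ∈ X := hX.mem_of_prov_imp (.negIntro φ) (hX.neg_mem_iff.2 hn)
  exact hω.1.neg_mem_iff.1 (hω.2 _ hnn) h

theorem mem_canonicalOmega_of_necessities_subset (hX : MaxConsistent X)
    (hω : ω ∈ canonicalOmega X) {ω' : Set Formula} (hω' : MaxConsistent ω')
    (h : necessities ω ⊆ ω') : ω' ∈ canonicalOmega X :=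
  ⟨hω', fun _ hφ => h ((nec_mem_iff_of_mem_canonicalOmega hX hω).2 hφ)⟩

theorem exists_mem_canonicalOmega_not_mem_of_nec_not_mem (hX : MaxConsistent X)
    (hω : ω ∈ canonicalOmega X) {φ : Formula} (h : φ.nec ∉ ω) :
    ∃ ω' ∈ canonicalOmega X, φ ∉ ω' := by
  obtain ⟨ω', hsub, hω', hφ⟩ :=
    exists_maxConsistent_of_not_provFrom fun hp => h (hω.1.mem_necessities_of_provFrom hp)
  exact ⟨ω', mem_canonicalOmega_of_necessities_subset hX hω hω' hsub, hφ⟩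

theorem exists_mem_canonicalOmega_simRel_not_mem_of_blame_mem (hX : MaxConsistent X)
    (hω : ω ∈ canonicalOmega X) {φ : Formula} (h : φ.blame ∈ ω) :
    ∃ ω' ∈ canonicalOmega X, simRel ω ω' ∧ φ ∉ ω' := by
  obtain ⟨ω', hsub, hω', hφ⟩ :=
    exists_maxConsistent_of_not_provFrom fun hp => (hω.1.mem_unblamed_of_provFrom hp).2 h
  exact ⟨ω', mem_canonicalOmega_of_necessities_subset hX hω hω'
    (hω.1.necessities_subset_unblamed.trans hsub), simRel_of_unblamed_subset hω.1 hω' hsub, hφ⟩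

theorem sat_canonicalGame_iff (hX : MaxConsistent X) (φ : Formula)
    (d : (canonicalGame X).D) (a : (canonicalGame X).A d) :
    Sat (canonicalGame X) φ d a ↔ φ ∈ a.val.val := by
  induction φ generalizing d a with
  | var p => exact Iff.rfl
  | neg ψ ih => simp only [Sat, ih, a.val.property.1.neg_mem_iff]
  | imp ψ χ ihψ ihχ => simp only [Sat, ihψ, ihχ, a.val.property.1.imp_mem_iff]
  | nec ψ ih =>
    rw [nec_mem_iff_of_mem_canonicalOmega hX a.val.property]
    refine ⟨fun hsat => ?_, fun hψ d' a' => (ih d' a').2 (a'.val.property.2 ψ hψ)⟩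
    by_contra hn
    obtain ⟨ω', hω', hψ⟩ := exists_mem_canonicalOmega_not_mem_of_nec_not_mem hX
      (self_mem_canonicalOmega hX) hn
    exact hψ ((ih ⟨ω', hω'⟩ ⟨⟨ω', hω'⟩, fun _ => Iff.rfl⟩).1 (hsat _ _))
  | blame ψ ih =>
    have hω := a.val.property
    refine ⟨fun ⟨hψ, a', hψ'⟩ => ?_, fun hA => ?_⟩
    · by_contra hA
      have hR : ψ.R ∈ a.val.val := hω.1.R_mem_iff.2 ⟨(ih d a).1 hψ, hA⟩
      have hR' : ψ.R ∈ a'.val.val := (a.property.symm.trans a'.property ψ).1 hR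
      exact hψ' ((ih d a').2 (a'.val.property.1.R_mem_iff.1 hR').1)
    · obtain ⟨ω', hω', hsim, hψ⟩ :=
        exists_mem_canonicalOmega_simRel_not_mem_of_blame_mem hX hω hA
      exact ⟨(ih d a).2 (hω.1.mem_of_prov_imp (.truthA ψ) hA),
        ⟨⟨ω', hω'⟩, a.property.trans hsim⟩, fun hsat => hψ ((ih d _).1 hsat)⟩

end Canonical

/-- Strong completeness: if `X₀ ⊬ φ`, then there is a security game, an action
`d` of the defender, and a response action `a` of the attacker such that
`(d,a) ⊨ χ` for each `χ ∈ X₀` and `(d,a) ⊭ φ`. -/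
theorem strong_completeness (X₀ : Set Formula) (φ : Formula)
    (h : ¬ ProvFrom X₀ φ) :
    ∃ (G : SecurityGame) (d : G.D) (a : G.A d),
      (∀ χ ∈ X₀, Sat G χ d a) ∧ ¬ Sat G φ d a := by
  obtain ⟨X, hX₀, hX, hφ⟩ := exists_maxConsistent_of_not_provFrom h
  let d : (canonicalGame X).D := ⟨X, self_mem_canonicalOmega hX⟩
  let a : (canonicalGame X).A d := ⟨d, fun _ => Iff.rfl⟩
  exact ⟨canonicalGame X, d, a, fun χ hχ => (sat_canonicalGame_iff hX χ d a).2 (hX₀ hχ),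
    fun hsat => hφ ((sat_canonicalGame_iff hX φ d a).1 hsat)⟩
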